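/- arXiv:2306.00273 — 7 statements merged into one kernel-verified Lean document; each statement's English description precedes it below -/
import Mathlib

section
/- For all m, M, a > 0, there exists a unique L₁ ∈ (0, a/2) satisfying M·L₁/a^3 − m/(4L₁^2) − M/(2(L₁+a/2)^2) + M/(2(a/2−L₁)^2) = 0. -/
/-!
On `(0, a/2)` every term of the left-hand side is increasing in `L₁`, strictly so for `M L₁ / a³`;
the left-hand side is continuous there and tends to `-∞` as `L₁ → 0⁺` (the term `-m/(4L₁²)`) and
to `+∞` as `L₁ → (a/2)⁻` (the term `M/(2(a/2-L₁)²)`). The intermediate value theorem gives a root,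
and strict monotonicity makes it unique.
-/

open Filter Set Topology

section IntermediateValue

variable {α δ : Type*} [ConditionallyCompleteLinearOrder α] [TopologicalSpace α] [OrderTopology α]
  [DenselyOrdered α] [LinearOrder δ] [TopologicalSpace δ] [OrderClosedTopology δ]

theorem StrictMonoOn.existsUnique_mem_Ioo_eq {f : α → δ} {l u : α} (hlu : l < u)
    (hmono : StrictMonoOn f (Ioo l u)) (hf : ContinuousOn f (Ioo l u))
    (hl : Tendsto f (𝓝[>] l) atBot) (hu : Tendsto f (𝓝[<] u) atTop) (y : δ) :
    ∃! x ∈ Ioo l u, f x = y := by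
  have := nhdsGT_neBot_of_exists_gt ⟨u, hlu⟩
  have := nhdsLT_neBot_of_exists_lt ⟨l, hlu⟩
  obtain ⟨x, hx, hfx⟩ := isPreconnected_Ioo.intermediate_value₂_eventually₂
    (le_principal_iff.2 (Ioo_mem_nhdsGT hlu)) (le_principal_iff.2 (Ioo_mem_nhdsLT hlu)) hf
    continuousOn_const (hl.eventually_le_atBot y) (hu.eventually_ge_atTop y)
  exact ⟨x, ⟨hx, hfx⟩, fun x' hx' => hmono.injOn hx'.1 hx (hx'.2.trans hfx.symm)⟩

end IntermediateValue

theorem tendsto_const_div_nhdsWithin_atTop {X : Type*} [TopologicalSpace X] {g : X → ℝ}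
    {s : Set X} {x₀ : X} {c : ℝ} (hc : 0 < c) (hg : ContinuousAt g x₀) (hg₀ : g x₀ = 0)
    (hpos : ∀ x ∈ s, 0 < g x) : Tendsto (fun x => c / g x) (𝓝[s] x₀) atTop := by
  have : Tendsto g (𝓝[s] x₀) (𝓝[>] 0) :=
    tendsto_nhdsWithin_of_tendsto_nhds_of_eventually_within _
      (hg₀ ▸ hg.tendsto.mono_left nhdsWithin_le_nhds) (eventually_nhdsWithin_of_forall hpos)
  simpa only [div_eq_mul_inv, Pi.inv_apply] using this.inv_tendsto_nhdsGT_zero.const_mul_atTop hc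

/-- `∂V/∂x (x, 0)` for the amended potential `V` of the COM-reduced binary asteroid problem. -/
noncomputable def amendedPotentialDerivX (m M a x : ℝ) : ℝ :=
  M*x/a^3 - m/(4*x^2) - M/(2*(x+a/2)^2) + M/(2*(a/2-x)^2)

namespace amendedPotentialDerivX

variable {m M a : ℝ}

theorem strictMonoOn (hm : 0 ≤ m) (hM : 0 < M) (ha : 0 < a) :
    StrictMonoOn (amendedPotentialDerivX m M a) (Ioo 0 (a/2)) := by
  rintro x ⟨hx₀, hx⟩ y ⟨hy₀, hy⟩ hxy
  have h₁ : M*x/a^3 < M*y/a^3 := by gcongr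
  have h₂ : m/(4*y^2) ≤ m/(4*x^2) := by gcongr
  have h₃ : M/(2*(y+a/2)^2) ≤ M/(2*(x+a/2)^2) := by gcongr
  have h₄ : M/(2*(a/2-x)^2) ≤ M/(2*(a/2-y)^2) := by
    have : 0 < a/2 - y := by linarith
    gcongr
  unfold amendedPotentialDerivX
  linarith

theorem continuousOn : ContinuousOn (amendedPotentialDerivX m M a) (Ioo 0 (a/2)) := by
  rintro x ⟨hx₀, hx⟩
  have : 0 < a/2 - x := by linarith
  have : 0 < x + a/2 := by linarith
  unfold amendedPotentialDerivX
  apply ContinuousAt.continuousWithinAt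
  fun_prop (disch := positivity)

theorem tendsto_nhdsGT_zero (hm : 0 < m) (ha : 0 < a) :
    Tendsto (amendedPotentialDerivX m M a) (𝓝[>] 0) atBot := by
  have hrest : ContinuousAt (fun x => M*x/a^3 - M/(2*(x+a/2)^2) + M/(2*(a/2-x)^2)) 0 := by
    fun_prop (disch := simp [ha.ne'])
  have hsing := tendsto_const_div_nhdsWithin_atTop (x₀ := 0) (g := fun x => 4*x^2) hm
    (by fun_prop) (by simp) fun x (hx : 0 < x) => by positivity
  refine ((hrest.tendsto.mono_left nhdsWithin_le_nhds).add_atBot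
    (tendsto_neg_atTop_atBot.comp hsing)).congr fun x => ?_
  simp only [amendedPotentialDerivX, Function.comp_apply]
  ring

theorem tendsto_nhdsLT (hM : 0 < M) (ha : 0 < a) :
    Tendsto (amendedPotentialDerivX m M a) (𝓝[<] (a/2)) atTop := by
  have hrest : ContinuousAt (fun x => M*x/a^3 - m/(4*x^2) - M/(2*(x+a/2)^2)) (a/2) := by
    fun_prop (disch := simp [ha.ne'])
  have hsing := tendsto_const_div_nhdsWithin_atTop (x₀ := a/2) (g := fun x => 2*(a/2-x)^2) hM
    (by fun_prop) (by simp) fun x (hx : x < a/2) => by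
      have : 0 < a/2 - x := by linarith
      positivity
  exact (hrest.tendsto.mono_left nhdsWithin_le_nhds).add_atTop hsing

end amendedPotentialDerivX

theorem stmt2 (m M a : ℝ) (hm : 0 < m) (hM : 0 < M) (ha : 0 < a) :
    ∃! L₁ : ℝ, L₁ ∈ Set.Ioo (0:ℝ) (a/2) ∧
      M*L₁/a^3 - m/(4*L₁^2) - M/(2*(L₁+a/2)^2) + M/(2*(a/2-L₁)^2) = 0 :=
  (amendedPotentialDerivX.strictMonoOn hm.le hM ha).existsUnique_mem_Ioo_eq (by positivity)
    amendedPotentialDerivX.continuousOn (amendedPotentialDerivX.tendsto_nhdsGT_zero hm ha)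
    (amendedPotentialDerivX.tendsto_nhdsLT hM ha) 0
end

section
/- For all m, M, a > 0, there exists a unique L₂ ∈ (a/2, ∞) satisfying M·L₂/a^3 − m/(4L₂^2) − M/(2(L₂+a/2)^2) − M/(2(L₂−a/2)^2) = 0. -/
theorem stmt3 (m M a : ℝ) (hm : 0 < m) (hM : 0 < M) (ha : 0 < a) :
    ∃! L₂ : ℝ, L₂ ∈ Set.Ioi (a/2) ∧
      M*L₂/a^3 - m/(4*L₂^2) - M/(2*(L₂+a/2)^2) - M/(2*(L₂-a/2)^2) = 0 := by
  set f : ℝ → ℝ := fun x => M*x/a^3 - m/(4*x^2) - M/(2*(x+a/2)^2) - M/(2*(x-a/2)^2)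
    with hf
  have ha2 : 0 < a/2 := by linarith
  -- strict monotonicity on Ioi (a/2)
  have hmono : StrictMonoOn f (Set.Ioi (a/2)) := by
    intro x hx y hy hxy
    simp only [Set.mem_Ioi] at hx hy
    have hx0 : 0 < x := lt_trans ha2 hx
    have hy0 : 0 < y := lt_trans ha2 hy
    have hxa : 0 < x - a/2 := by linarith
    have hya : 0 < y - a/2 := by linarith
    simp only [hf]
    gcongr <;> first | positivity | linarith
  -- negative at a
  have hfa : f a < 0 := by
    have h1 : a - a/2 = a/2 := by ring
    have hb1 : 0 < m/(4*a^2) := by positivity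
    have hb2 : 0 < M/(2*(a+a/2)^2) := by positivity
    have h2 : M*a/a^3 - M/(2*(a/2)^2) = -(M/a^2) := by
      field_simp
      ring
    have h3 : 0 < M/a^2 := by positivity
    simp only [hf, h1]
    linarith
  set q : ℝ := a + (m/4 + 5*M/2)*a/M with hq
  have hqpos : 0 < (m/4 + 5*M/2)*a/M := by positivity
  have hqa : a < q := by rw [hq]; linarith
  have hfq : 0 < f q := by
    have hq0 : 0 < q := lt_trans ha hqa
    have hqa2 : 0 < q - a/2 := by linarith
    have e1 : m/(4*q^2) ≤ m/(4*a^2) := by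
      gcongr
    have e2 : M/(2*(q+a/2)^2) ≤ M/(2*a^2) := by
      gcongr
      nlinarith
    have e3 : M/(2*(q-a/2)^2) ≤ 2*M/a^2 := by
      rw [div_le_div_iff₀ (by positivity) (by positivity)]
      have hsq : a^2 ≤ 4*(q-a/2)^2 := by nlinarith [sq_nonneg (q-a)]
      nlinarith [mul_le_mul_of_nonneg_left hsq hM.le]
    have e5 : (m/4 + 5*M/2)*a < M*q := by
      have hMq : M * q = M*a + (m/4 + 5*M/2)*a := by
        rw [hq]; field_simp
      nlinarith [mul_pos hM ha]
    have e4 : (m/4 + 5*M/2)/a^2 < M*q/a^3 := by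
      rw [div_lt_div_iff₀ (by positivity) (by positivity)]
      have := mul_lt_mul_of_pos_right e5 (show (0:ℝ) < a^2 by positivity)
      nlinarith [this]
    have esum : m/(4*a^2) + M/(2*a^2) + 2*M/a^2 = (m/4 + 5*M/2)/a^2 := by
      field_simp; ring
    simp only [hf]
    linarith
  -- continuity on [a, q]
  have hcont : ContinuousOn f (Set.Icc a q) := by
    apply ContinuousOn.sub
    apply ContinuousOn.sub
    apply ContinuousOn.sub
    · exact (continuousOn_const.mul continuousOn_id).div continuousOn_const
        (fun x _ => by positivity)
    · exact continuousOn_const.div (by fun_prop) (fun x hx => by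
        have : 0 < x := lt_of_lt_of_le ha hx.1; positivity)
    · exact continuousOn_const.div (by fun_prop) (fun x hx => by
        have : 0 < x := lt_of_lt_of_le ha hx.1; positivity)
    · exact continuousOn_const.div (by fun_prop) (fun x hx => by
        have : 0 < x - a/2 := by have := hx.1; linarith
        positivity)
  obtain ⟨c, hc, hfc⟩ := intermediate_value_Ioo hqa.le hcont
    (Set.mem_Ioo.mpr ⟨hfa, hfq⟩)
  have hcmem : c ∈ Set.Ioi (a/2) := by
    simp only [Set.mem_Ioi]; have := hc.1; linarith
  refine ⟨c, ⟨hcmem, hfc⟩, ?_⟩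
  intro y hy
  exact hmono.injOn hy.1 hcmem (by rw [show f y = 0 from hy.2, hfc])
end

section
/- For all m, M, a > 0, there exists a unique y = L₄ > 0 satisfying M/a^3 − m/(4y^3) − M/((a/2)^2 + y^2)^{3/2} = 0. Moreover L₄ > (√3/2)a. -/
theorem stmt4 (m M a : ℝ) (hm : 0 < m) (hM : 0 < M) (ha : 0 < a) :
    (∃! y : ℝ, 0 < y ∧
      M/a^3 - m/(4*y^3) - M/(Real.sqrt ((a/2)^2 + y^2))^3 = 0) ∧
    ∀ y : ℝ, 0 < y →
      M/a^3 - m/(4*y^3) - M/(Real.sqrt ((a/2)^2 + y^2))^3 = 0 →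
      Real.sqrt 3 / 2 * a < y := by
  have f : ℝ → ℝ := fun y => M/a^3 - m/(4*y^3) - M/(Real.sqrt ((a/2)^2 + y^2))^3
  set f : ℝ → ℝ := fun y => M/a^3 - m/(4*y^3) - M/(Real.sqrt ((a/2)^2 + y^2))^3 with hfdef
  -- strict monotonicity on positives
  have hmono : ∀ x z : ℝ, 0 < x → x < z → f x < f z := by
    intro x z hx hxz
    have hz : 0 < z := hx.trans hxz
    have h1 : m/(4*z^3) < m/(4*x^3) := by
      apply div_lt_div_of_pos_left hm (by positivity)
      have : x^3 < z^3 := pow_lt_pow_left₀ hxz hx.le (by norm_num)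
      linarith
    have hsx : 0 < Real.sqrt ((a/2)^2 + x^2) := Real.sqrt_pos.2 (by positivity)
    have h2 : Real.sqrt ((a/2)^2 + x^2) < Real.sqrt ((a/2)^2 + z^2) := by
      apply Real.sqrt_lt_sqrt (by positivity)
      nlinarith
    have h3 : M/(Real.sqrt ((a/2)^2 + z^2))^3 < M/(Real.sqrt ((a/2)^2 + x^2))^3 := by
      apply div_lt_div_of_pos_left hM (by positivity)
      exact pow_lt_pow_left₀ h2 hsx.le (by norm_num)
    simp only [hfdef]
    linarith
  set y₀ : ℝ := Real.sqrt 3 / 2 * a with hy₀def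
  have hy₀ : 0 < y₀ := by
    have : (0:ℝ) < Real.sqrt 3 := Real.sqrt_pos.2 (by norm_num)
    positivity
  have hfy₀ : f y₀ < 0 := by
    have harg : (a/2)^2 + y₀^2 = a^2 := by
      have h3 : Real.sqrt 3 ^ 2 = 3 := Real.sq_sqrt (by norm_num)
      simp only [hy₀def]; ring_nf; nlinarith [h3]
    have hsq : Real.sqrt ((a/2)^2 + y₀^2) = a := by
      rw [harg]; exact Real.sqrt_sq ha.le
    simp only [hfdef, hsq]
    have : 0 < m/(4*y₀^3) := by positivity
    linarith
  -- large point
  set c : ℝ := (m/4 + M)/M with hcdef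
  have hc1 : 1 < c := by
    rw [hcdef, lt_div_iff₀ hM]; linarith
  set y₂ : ℝ := a * c with hy₂def
  have hy₂ : 0 < y₂ := by positivity
  have hy₀₂ : y₀ < y₂ := by
    have hs3 : Real.sqrt 3 < 2 := by
      nlinarith [Real.sq_sqrt (show (0:ℝ) ≤ 3 by norm_num), Real.sqrt_nonneg 3]
    have : y₀ < a := by
      rw [hy₀def]; nlinarith
    have : a < y₂ := by rw [hy₂def]; nlinarith
    linarith
  have hfy₂ : 0 < f y₂ := by
    have hs : y₂ < Real.sqrt ((a/2)^2 + y₂^2) := by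
      rw [show ((a/2)^2 + y₂^2) = (a/2)^2 + y₂^2 from rfl]
      rw [Real.lt_sqrt hy₂.le]
      nlinarith
    have h3 : M/(Real.sqrt ((a/2)^2 + y₂^2))^3 < M/y₂^3 :=
      div_lt_div_of_pos_left hM (by positivity) (pow_lt_pow_left₀ hs hy₂.le (by norm_num))
    have key : m/(4*y₂^3) + M/y₂^3 ≤ M/a^3 := by
      have e1 : m/(4*y₂^3) + M/y₂^3 = (m/4 + M)/y₂^3 := by
        field_simp
      rw [e1, div_le_div_iff₀ (by positivity) (by positivity)]
      have hMc : M * c = m/4 + M := by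
        rw [hcdef]; field_simp
      have : y₂^3 = a^3 * c^3 := by rw [hy₂def]; ring
      rw [this, ← hMc]
      have hcpos : (0:ℝ) < c := lt_trans one_pos hc1
      have hc2 : 1 < c^2 := by nlinarith
      have hc3 : c ≤ c^3 := by nlinarith [mul_pos hcpos (sub_pos.2 hc2)]
      nlinarith [mul_nonneg (sub_nonneg.2 hc3) (mul_pos hM (pow_pos ha 3)).le]
    simp only [hfdef]
    linarith
  -- IVT
  have hcont : ContinuousOn f (Set.Icc y₀ y₂) := by
    apply ContinuousOn.sub
    · apply ContinuousOn.sub continuousOn_const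
      exact ContinuousOn.div continuousOn_const (by fun_prop)
        (fun y hy => by
          have : 0 < y := lt_of_lt_of_le hy₀ hy.1
          positivity)
    · exact ContinuousOn.div continuousOn_const (by fun_prop)
        (fun y hy => by
          have : 0 < Real.sqrt ((a/2)^2 + y^2) := Real.sqrt_pos.2 (by positivity)
          positivity)
  have hIVT := intermediate_value_Ioo hy₀₂.le hcont
  have h0mem : (0:ℝ) ∈ Set.Ioo (f y₀) (f y₂) := ⟨hfy₀, hfy₂⟩
  obtain ⟨y, hyI, hy0⟩ := hIVT h0mem
  have hypos : 0 < y := hy₀.trans hyI.1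
  -- any positive root is > y₀
  have hroot_gt : ∀ z : ℝ, 0 < z → f z = 0 → y₀ < z := by
    intro z hz hz0
    by_contra h
    push_neg at h
    rcases eq_or_lt_of_le h with heq | hlt
    · rw [heq] at hz0; rw [hz0] at hfy₀; exact lt_irrefl 0 hfy₀
    · have := hmono z y₀ hz hlt
      rw [hz0] at this; linarith
  constructor
  · refine ⟨y, ⟨hypos, hy0⟩, ?_⟩
    intro z ⟨hz, hz0⟩
    have hz0' : f z = 0 := hz0
    rcases lt_trichotomy z y with h | h | h
    · have := hmono z y hz h
      rw [hz0', hy0] at this; exact absurd this (lt_irrefl 0)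
    · exact h
    · have := hmono y z hypos h
      rw [hz0', hy0] at this; exact absurd this (lt_irrefl 0)
  · intro z hz hz0
    exact hroot_gt z hz hz0
end

section
/- Let m, M, a > 0 and let L₁ ∈ (0, a/2) satisfy the collinear critical-point equation M·L₁/a^3 − m/(4L₁²) − M/(2(L₁+a/2)²) + M/(2(a/2−L₁)²) = 0. Then γ := ∂²V/∂y²(L₁, 0) = M/a^3 − m/(4L₁^3) − M/(2(L₁+a/2)^3) − M/(2(a/2−L₁)^3) is strictly negative. -/
/-!
Subtracting `1/L` times the critical-point equation from `γ` eliminates `m`. Since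
`(L + a/2) - L = a/2 = (a/2 - L) + L`, what remains collapses to
`γ = M a / (4 L) · (1/(L + a/2)³ - 1/(a/2 - L)³)`, which is negative because `a/2 - L < L + a/2`.
-/

theorem collinear_gamma_eq {K : Type*} [Field K] [CharZero K] {m M a L : K}
    (ha : a ≠ 0) (hL : L ≠ 0) (hd₁ : L + a/2 ≠ 0) (hd₂ : a/2 - L ≠ 0) :
    M/a^3 - m/(4*L^3) - M/(2*(L+a/2)^3) - M/(2*(a/2-L)^3)
      = (M*L/a^3 - m/(4*L^2) - M/(2*(L+a/2)^2) + M/(2*(a/2-L)^2)) / L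
        + M*a/(4*L) * (1/(L+a/2)^3 - 1/(a/2-L)^3) := by
  -- `field_simp` rewrites `L + a/2` as `(L * 2 + a) / 2` and needs the numerators to be nonzero.
  have hd₁' : L * 2 + a ≠ 0 := fun h => hd₁ (by linear_combination h / 2)
  have hd₂' : a - L * 2 ≠ 0 := fun h => hd₂ (by linear_combination h / 2)
  field_simp
  ring

theorem stmt10_general (m M a : ℝ) (hM : 0 < M) (ha : 0 < a)
    (L₁ : ℝ) (hL₁ : L₁ ∈ Set.Ioo (0:ℝ) (a/2))
    (hcrit : M*L₁/a^3 - m/(4*L₁^2) - M/(2*(L₁+a/2)^2) + M/(2*(a/2-L₁)^2) = 0) :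
    M/a^3 - m/(4*L₁^3) - M/(2*(L₁+a/2)^3) - M/(2*(a/2-L₁)^3) < 0 := by
  obtain ⟨hL₁pos, hL₁lt⟩ := hL₁
  have hd₁ : 0 < L₁ + a/2 := by linarith
  have hd₂ : 0 < a/2 - L₁ := by linarith
  rw [collinear_gamma_eq ha.ne' hL₁pos.ne' hd₁.ne' hd₂.ne', hcrit, zero_div, zero_add]
  refine mul_neg_of_pos_of_neg (by positivity) (sub_neg.mpr ?_)
  exact one_div_lt_one_div_of_lt (pow_pos hd₂ 3)
    (pow_lt_pow_left₀ (by linarith) hd₂.le three_ne_zero)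

theorem stmt10 (m M a : ℝ) (hm : 0 < m) (hM : 0 < M) (ha : 0 < a)
    (L₁ : ℝ) (hL₁ : L₁ ∈ Set.Ioo (0:ℝ) (a/2))
    (hcrit : M*L₁/a^3 - m/(4*L₁^2) - M/(2*(L₁+a/2)^2) + M/(2*(a/2-L₁)^2) = 0) :
    M/a^3 - m/(4*L₁^3) - M/(2*(L₁+a/2)^3) - M/(2*(a/2-L₁)^3) < 0 :=
  stmt10_general m M a hM ha L₁ hL₁ hcrit
end

section
/- Let m, M > 0 and set μ₁ = m₁/M, μ₂ = m₂/M with m₁, m₂ > 0. The quintic q(z) = z^5 + 2z^4 + (1+μ₁)z^3 − (1+μ₂)z^2 − 2z − 1 has exactly one positive real root. -/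
theorem stmt12 (m₁ m₂ M : ℝ) (hm₁ : 0 < m₁) (hm₂ : 0 < m₂) (hM : 0 < M) :
    ∃! z : ℝ, 0 < z ∧
      z^5 + 2*z^4 + (1 + m₁/M)*z^3 - (1 + m₂/M)*z^2 - 2*z - 1 = 0 := by
  set μ₁ := m₁ / M with hμ₁def
  set μ₂ := m₂ / M with hμ₂def
  have hμ₁ : 0 < μ₁ := div_pos hm₁ hM
  have hμ₂ : 0 < μ₂ := div_pos hm₂ hM
  set Q : ℝ → ℝ := fun z => z^5 + 2*z^4 + (1 + μ₁)*z^3 - (1 + μ₂)*z^2 - 2*z - 1 with hQ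
  -- key monotonicity: for 0 < a < b, b² Q a < a² Q b
  have key : ∀ a b : ℝ, 0 < a → a < b → b^2 * Q a < a^2 * Q b := by
    intro a b ha hab
    have hb : 0 < b := ha.trans hab
    simp only [hQ]
    nlinarith [mul_pos ha hb, mul_pos (mul_pos ha hb) (mul_pos ha hb),
      sq_nonneg (a + b), sq_nonneg (a*b), mul_pos ha ha, mul_pos hb hb,
      mul_pos (mul_pos ha ha) (mul_pos hb hb),
      mul_pos (sub_pos.2 hab) (mul_pos ha hb),
      mul_pos hμ₁ (mul_pos (mul_pos ha hb) (mul_pos (mul_pos ha hb) (mul_pos ha hb))),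
      mul_pos (sub_pos.2 hab) (mul_pos (mul_pos ha ha) (mul_pos hb hb))]
  -- existence via IVT
  have hcont : ContinuousOn Q (Set.Icc (min 1 (μ₂/μ₁) / 2) (max 2 (μ₂/μ₁ + 1))) := by
    apply Continuous.continuousOn; fun_prop
  set c := min 1 (μ₂/μ₁) / 2 with hc
  set d := max 2 (μ₂/μ₁ + 1) with hd
  have hcpos : 0 < c := by
    have : 0 < min 1 (μ₂/μ₁) := lt_min one_pos (div_pos hμ₂ hμ₁)
    positivity
  have hc1 : c < 1 := by
    have : min 1 (μ₂/μ₁) ≤ 1 := min_le_left _ _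
    simp only [hc]; linarith
  have hcμ : μ₁ * c < μ₂ := by
    have h1 : c ≤ μ₂/μ₁/2 := by
      have : min 1 (μ₂/μ₁) ≤ μ₂/μ₁ := min_le_right _ _
      simp only [hc]; linarith
    have h2 : μ₁ * (μ₂/μ₁/2) = μ₂/2 := by field_simp
    nlinarith [div_pos hμ₂ hμ₁]
  have hd2 : 2 ≤ d := le_max_left _ _
  have hdμ : μ₂ < μ₁ * d := by
    have h1 : μ₂/μ₁ + 1 ≤ d := le_max_right _ _
    have h2 : μ₁ * (μ₂/μ₁) = μ₂ := by field_simp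
    nlinarith
  have hcd : c ≤ d := by linarith
  have hQc : Q c < 0 := by
    simp only [hQ]
    have h3 : c^3 < 1 := pow_lt_one₀ hcpos.le hc1 (by norm_num)
    have h4 : c^2*(μ₁*c-μ₂) < 0 := mul_neg_of_pos_of_neg (by positivity) (by linarith)
    nlinarith [mul_nonneg (sub_nonneg.2 h3.le) (sq_nonneg (c+1))]
  have hQd : 0 < Q d := by
    simp only [hQ]
    have hd1 : (1:ℝ) < d := by linarith
    have h6 : 0 < (d^3-1)*(d+1)^2 := mul_pos (by nlinarith [one_lt_pow₀ hd1 (n := 3) (by norm_num)]) (by positivity)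
    have h5 : 0 < d^2*(μ₁*d-μ₂) := mul_pos (by positivity) (by linarith)
    nlinarith
  have : (0:ℝ) ∈ Set.Icc (Q c) (Q d) := ⟨hQc.le, hQd.le⟩
  obtain ⟨z, hzmem, hz0⟩ := intermediate_value_Icc hcd hcont this
  refine ⟨z, ⟨lt_of_lt_of_le hcpos hzmem.1, hz0⟩, ?_⟩
  rintro y ⟨hy, hQy⟩
  have hz : 0 < z := lt_of_lt_of_le hcpos hzmem.1
  rcases lt_trichotomy y z with h | h | h
  · exfalso
    have := key y z hy h
    simp only [hQ] at this hQy hz0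
    nlinarith
  · exact h
  · exfalso
    have := key z y hz h
    simp only [hQ] at this hQy hz0
    nlinarith
end

section
/- Let m, M, a > 0 and let L₄ > 0 satisfy M/a³ − m/(4L₄³) − M/((a/2)² + L₄²)^{3/2} = 0. Then at the point (0, L₄): (i) α := ∂²V/∂x²(0,L₄) = 3Ma²/(4((a/2)² + L₄²)^{5/2}) > 0, and (ii) γ := ∂²V/∂y²(0,L₄) = 3m/(4L₄³) + 3ML₄²/((a/2)² + L₄²)^{5/2} > 0. -/
/-!
Along each coordinate line through `(0, L₄)` the potential `V` is a quadratic plus a weighted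
sum of inverse distances `(√((t + s)^2 + c))⁻¹`, whose second derivative is
`3 (t + s)^2 / r^5 - 1 / r^3`. Summing these at `(0, L₄)` and eliminating `M / a^3` with the
equation of `L₄` gives the two closed forms, which are visibly positive.
-/

open Filter Topology

section InverseDistance

variable {s c x : ℝ}

lemma hasDerivAt_sqrt_sq_add (h : 0 < (x + s)^2 + c) :
    HasDerivAt (fun t => √((t + s)^2 + c)) ((x + s) / √((x + s)^2 + c)) x := by
  have hq : HasDerivAt (fun t => (t + s)^2 + c) (2 * (x + s)) x := by
    simpa using (((hasDerivAt_id x).add_const s).pow 2).add_const c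
  refine (hq.sqrt h.ne').congr_deriv ?_
  have hr := (Real.sqrt_pos.2 h).ne'
  field_simp

lemma hasDerivAt_inv_sqrt_sq_add (h : 0 < (x + s)^2 + c) :
    HasDerivAt (fun t => (√((t + s)^2 + c))⁻¹) (-((x + s) / √((x + s)^2 + c)^3)) x := by
  have hr := (Real.sqrt_pos.2 h).ne'
  refine ((hasDerivAt_sqrt_sq_add h).inv hr).congr_deriv ?_
  field_simp

lemma hasDerivAt_div_sqrt_sq_add_pow_three (h : 0 < (x + s)^2 + c) :
    HasDerivAt (fun t => (t + s) / √((t + s)^2 + c)^3)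
      (1 / √((x + s)^2 + c)^3 - 3 * (x + s)^2 / √((x + s)^2 + c)^5) x := by
  have hr := (Real.sqrt_pos.2 h).ne'
  refine (((hasDerivAt_id x).add_const s).fun_div ((hasDerivAt_sqrt_sq_add h).pow 3)
    (pow_ne_zero 3 hr)).congr_deriv ?_
  simp only [Pi.pow_apply, id]
  field_simp
  ring

end InverseDistance

section LinePotential

variable {ι : Type*} [Fintype ι] (k d : ℝ) (w s c : ι → ℝ) {x : ℝ}

/-- An amended potential restricted to a line: a centrifugal quadratic plus masses `w i` whose
squared distance from the point with parameter `t` is `(t + s i)^2 + c i`. -/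
noncomputable def linePotential (t : ℝ) : ℝ :=
  k * t^2 + d + ∑ i, w i * (√((t + s i)^2 + c i))⁻¹

lemma hasDerivAt_linePotential (h : ∀ i, 0 < (x + s i)^2 + c i) :
    HasDerivAt (linePotential k d w s c)
      (2 * k * x + ∑ i, w i * -((x + s i) / √((x + s i)^2 + c i)^3)) x := by
  have hquad : HasDerivAt (fun t => k * t^2 + d) (2 * k * x) x := by
    simpa [mul_comm, mul_left_comm] using ((hasDerivAt_pow 2 x).const_mul k).add_const d
  exact hquad.add (HasDerivAt.fun_sum fun i _ =>
    (hasDerivAt_inv_sqrt_sq_add (h i)).const_mul (w i))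

lemma hasDerivAt_deriv_linePotential (h : ∀ i, 0 < (x + s i)^2 + c i) :
    HasDerivAt (deriv (linePotential k d w s c))
      (2 * k + ∑ i, w i * (3 * (x + s i)^2 / √((x + s i)^2 + c i)^5
        - 1 / √((x + s i)^2 + c i)^3)) x := by
  have hnear : ∀ᶠ y in 𝓝 x, ∀ i, 0 < (y + s i)^2 + c i :=
    eventually_all.2 fun i => continuousAt_const.eventually_lt (by fun_prop) (h i)
  have hderiv : deriv (linePotential k d w s c) =ᶠ[𝓝 x]
      fun y => 2 * k * y + ∑ i, w i * -((y + s i) / √((y + s i)^2 + c i)^3) :=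
    hnear.mono fun y hy => (hasDerivAt_linePotential k d w s c hy).deriv
  refine HasDerivAt.congr_of_eventuallyEq ?_ hderiv
  have hlin : HasDerivAt (fun y => 2 * k * y) (2 * k) x := by
    simpa using (hasDerivAt_id x).const_mul (2 * k)
  refine (hlin.add (HasDerivAt.fun_sum (u := Finset.univ) fun i _ =>
    (hasDerivAt_div_sqrt_sq_add_pow_three (h i)).fun_neg.const_mul (w i))).congr_deriv ?_
  simp only [neg_sub]

end LinePotential

theorem stmt17 (m M a : ℝ) (hm : 0 < m) (hM : 0 < M) (ha : 0 < a)
    (L₄ : ℝ) (hL₄ : 0 < L₄)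
    (hcrit : M/a^3 - m/(4*L₄^3) - M/(Real.sqrt ((a/2)^2 + L₄^2))^3 = 0) :
    let V : ℝ → ℝ → ℝ := fun x y =>
      M/(2*a^3)*(x^2+y^2) + m/(4*Real.sqrt (x^2+y^2))
        + M/(2*Real.sqrt ((x+a/2)^2+y^2)) + M/(2*Real.sqrt ((x-a/2)^2+y^2))
    (deriv (fun x => deriv (fun x' => V x' L₄) x) 0
        = 3*M*a^2/(4*(Real.sqrt ((a/2)^2 + L₄^2))^5) ∧
      0 < 3*M*a^2/(4*(Real.sqrt ((a/2)^2 + L₄^2))^5)) ∧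
    (deriv (fun y => deriv (fun y' => V 0 y') y) L₄
        = 3*m/(4*L₄^3) + 3*M*L₄^2/(Real.sqrt ((a/2)^2 + L₄^2))^5 ∧
      0 < 3*m/(4*L₄^3) + 3*M*L₄^2/(Real.sqrt ((a/2)^2 + L₄^2))^5) := by
  intro V
  have hVx : (fun x' => V x' L₄) = linePotential (M/(2*a^3)) (M/(2*a^3) * L₄^2)
      ![m/4, M/2, M/2] ![0, a/2, -(a/2)] (fun _ => L₄^2) := by
    funext t
    simp only [V, linePotential, Fin.sum_univ_three, Matrix.cons_val]
    ring_nf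
  have hVy : (fun y' => V 0 y') = linePotential (M/(2*a^3)) 0
      ![m/4, M/2, M/2] (fun _ => 0) ![0, (a/2)^2, (a/2)^2] := by
    funext t
    simp only [V, linePotential, Fin.sum_univ_three, Matrix.cons_val]
    ring_nf
  refine ⟨⟨?_, by positivity⟩, ?_, by positivity⟩
  · rw [hVx, (hasDerivAt_deriv_linePotential _ _ _ _ _ fun _ => by positivity).deriv]
    simp only [Fin.sum_univ_three, Matrix.cons_val, zero_add, neg_sq, ne_eq,
      OfNat.ofNat_ne_zero, not_false_eq_true, zero_pow, Real.sqrt_sq hL₄.le]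
    linear_combination hcrit
  · rw [hVy, (hasDerivAt_deriv_linePotential _ _ _ _ _
      fun i => by fin_cases i <;> simp <;> positivity).deriv]
    simp only [Fin.sum_univ_three, Matrix.cons_val, add_zero, Real.sqrt_sq hL₄.le,
      add_comm (L₄^2) ((a/2)^2)]
    have hL : L₄^2 / L₄^5 = 1 / L₄^3 := by field_simp
    linear_combination hcrit + 3 * m / 4 * hL
end

section
/- Let m, M, a > 0. If (x, y) is a critical point of the amended potential V with x ≠ 0 and (x,y) not a singularity, then y = 0. Equivalently, every critical point of V off the x-axis lies on the y-axis. -/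
/-! With r₀, r₁, r₂ the distances to (0, 0), (-a/2, 0), (a/2, 0), one computes
∂V/∂y = y·B and ∂V/∂x = x·B + (Ma/4)(r₂⁻³ - r₁⁻³) for a common bracket B. Off the x-axis
the first equation forces B = 0, the second then forces r₁ = r₂, that is x = 0. -/

open Real

theorem HasDerivAt.const_div_mul_sqrt {g : ℝ → ℝ} {g' x : ℝ} (c k : ℝ) (hg : HasDerivAt g g' x)
    (hx : 0 < g x) :
    HasDerivAt (fun u => c / (k * √(g u))) (-(c * g') / (2 * k * √(g x) ^ 3)) x := by
  simp only [← div_div]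
  refine ((hasDerivAt_const x (c / k)).div (hg.sqrt hx.ne') (sqrt_pos.mpr hx).ne').congr_deriv ?_
  ring

theorem sq_add_sq_pos_of_ne {x y c : ℝ} (h : (x, y) ≠ (c, 0)) : 0 < (x - c) ^ 2 + y ^ 2 := by
  rcases eq_or_ne y 0 with rfl | _
  · have : x - c ≠ 0 := fun hxc => h (by rw [sub_eq_zero.mp hxc])
    positivity
  · positivity

theorem eq_zero_of_sqrt_add_eq_sqrt_sub {x y c : ℝ} (hc : c ≠ 0)
    (h : √((x + c) ^ 2 + y ^ 2) = √((x - c) ^ 2 + y ^ 2)) : x = 0 := by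
  rw [sqrt_inj (by positivity) (by positivity)] at h
  have : 4 * c * x = 0 := by linear_combination h
  simpa [hc] using this

noncomputable section AmendedPotential

variable (m M a : ℝ)

def amendedPotential (x y : ℝ) : ℝ :=
  M / (2 * a ^ 3) * (x ^ 2 + y ^ 2) + m / (4 * √(x ^ 2 + y ^ 2))
    + M / (2 * √((x + a / 2) ^ 2 + y ^ 2)) + M / (2 * √((x - a / 2) ^ 2 + y ^ 2))

def amendedBracket (x y : ℝ) : ℝ :=
  M / a ^ 3 - m / (4 * √(x ^ 2 + y ^ 2) ^ 3)
    - M / (2 * √((x + a / 2) ^ 2 + y ^ 2) ^ 3) - M / (2 * √((x - a / 2) ^ 2 + y ^ 2) ^ 3)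

variable {m M a} {x y : ℝ} (h₀ : 0 < x ^ 2 + y ^ 2) (h₁ : 0 < (x + a / 2) ^ 2 + y ^ 2)
  (h₂ : 0 < (x - a / 2) ^ 2 + y ^ 2)
include h₀ h₁ h₂

theorem hasDerivAt_amendedPotential_fst :
    HasDerivAt (fun x' => amendedPotential m M a x' y)
      (x * amendedBracket m M a x y
        + M * a / 4 * ((√((x - a / 2) ^ 2 + y ^ 2) ^ 3)⁻¹ - (√((x + a / 2) ^ 2 + y ^ 2) ^ 3)⁻¹))
      x := by
  have hq₀ : HasDerivAt (fun u => u ^ 2 + y ^ 2) (2 * x) x := by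
    simpa using (hasDerivAt_pow 2 x).add_const (y ^ 2)
  have hq₁ : HasDerivAt (fun u => (u + a / 2) ^ 2 + y ^ 2) (2 * (x + a / 2)) x := by
    simpa using (((hasDerivAt_id x).add_const (a / 2)).pow 2).add_const (y ^ 2)
  have hq₂ : HasDerivAt (fun u => (u - a / 2) ^ 2 + y ^ 2) (2 * (x - a / 2)) x := by
    simpa using (((hasDerivAt_id x).sub_const (a / 2)).pow 2).add_const (y ^ 2)
  refine ((((hq₀.const_mul (M / (2 * a ^ 3))).add (hq₀.const_div_mul_sqrt m 4 h₀)).add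
    (hq₁.const_div_mul_sqrt M 2 h₁)).add (hq₂.const_div_mul_sqrt M 2 h₂)).congr_deriv ?_
  unfold amendedBracket
  field_simp
  ring

theorem hasDerivAt_amendedPotential_snd :
    HasDerivAt (fun y' => amendedPotential m M a x y') (y * amendedBracket m M a x y) y := by
  have hq : ∀ c : ℝ, HasDerivAt (fun v => c + v ^ 2) (2 * y) y := fun c => by
    simpa using (hasDerivAt_pow 2 y).const_add c
  refine (((((hq (x ^ 2)).const_mul (M / (2 * a ^ 3))).add ((hq _).const_div_mul_sqrt m 4 h₀)).add
    ((hq _).const_div_mul_sqrt M 2 h₁)).add ((hq _).const_div_mul_sqrt M 2 h₂)).congr_deriv ?_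
  unfold amendedBracket
  field_simp
  ring

end AmendedPotential

theorem stmt18_general (m M a : ℝ) (hM : 0 < M) (ha : 0 < a)
    (x y : ℝ) (hsing0 : (x, y) ≠ (0, 0)) (hsing1 : (x, y) ≠ (a/2, 0))
    (hsing2 : (x, y) ≠ (-(a/2), 0)) (hx : x ≠ 0)
    (hcx : deriv (fun x' : ℝ =>
      M/(2*a^3)*(x'^2+y^2) + m/(4*Real.sqrt (x'^2+y^2))
        + M/(2*Real.sqrt ((x'+a/2)^2+y^2)) + M/(2*Real.sqrt ((x'-a/2)^2+y^2))) x = 0)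
    (hcy : deriv (fun y' : ℝ =>
      M/(2*a^3)*(x^2+y'^2) + m/(4*Real.sqrt (x^2+y'^2))
        + M/(2*Real.sqrt ((x+a/2)^2+y'^2)) + M/(2*Real.sqrt ((x-a/2)^2+y'^2))) y = 0) :
    y = 0 := by
  by_contra hy
  have h₀ : 0 < x ^ 2 + y ^ 2 := by simpa using sq_add_sq_pos_of_ne hsing0
  have hsub : 0 < (x - a / 2) ^ 2 + y ^ 2 := sq_add_sq_pos_of_ne hsing1
  have hadd : 0 < (x + a / 2) ^ 2 + y ^ 2 := by simpa using sq_add_sq_pos_of_ne hsing2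
  have hB : amendedBracket m M a x y = 0 :=
    (mul_eq_zero.mp ((hasDerivAt_amendedPotential_snd h₀ hadd hsub).deriv.symm.trans hcy)).resolve_left hy
  have hr := (hasDerivAt_amendedPotential_fst h₀ hadd hsub).deriv.symm.trans hcx
  rw [hB, mul_zero, zero_add, mul_eq_zero, sub_eq_zero, inv_inj,
    pow_left_inj₀ (sqrt_nonneg _) (sqrt_nonneg _) three_ne_zero] at hr
  exact hx (eq_zero_of_sqrt_add_eq_sqrt_sub (half_pos ha).ne' (hr.resolve_left (by positivity)).symm)

theorem stmt18 (m M a : ℝ) (hm : 0 < m) (hM : 0 < M) (ha : 0 < a)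
    (x y : ℝ) (hsing0 : (x, y) ≠ (0, 0)) (hsing1 : (x, y) ≠ (a/2, 0))
    (hsing2 : (x, y) ≠ (-(a/2), 0)) (hx : x ≠ 0)
    (hcx : deriv (fun x' : ℝ =>
      M/(2*a^3)*(x'^2+y^2) + m/(4*Real.sqrt (x'^2+y^2))
        + M/(2*Real.sqrt ((x'+a/2)^2+y^2)) + M/(2*Real.sqrt ((x'-a/2)^2+y^2))) x = 0)
    (hcy : deriv (fun y' : ℝ =>
      M/(2*a^3)*(x^2+y'^2) + m/(4*Real.sqrt (x^2+y'^2))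
        + M/(2*Real.sqrt ((x+a/2)^2+y'^2)) + M/(2*Real.sqrt ((x-a/2)^2+y'^2))) y = 0) :
    y = 0 :=
  stmt18_general m M a hM ha x y hsing0 hsing1 hsing2 hx hcx hcy
end
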